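/- arXiv:1812.00289 — 4 statements merged into one kernel-verified Lean document; each statement's English description precedes it below -/
import Mathlib

section
/- With Q1, Q2 symmetric positive definite and φ(t) = [(1−t)Q1 + tQ2]⁻¹[(1−t)Q1 x1 + t Q2 x2], the map φ : [0,1] → ℝ^n is differentiable and satisfies t[(1−t)Q1 + tQ2] φ'(t) = Q1(φ(t) − x1) for all t ∈ [0,1], with φ(0) = x1 and φ(1) = x2. -/
/-!
On `[0, 1]` the matrix `Q t = (1 - t) • Q1 + t • Q2` is positive definite, hence invertible, and
by Cramer's rule `φ` is a quotient of determinants polynomial in `t`, so it is differentiable.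
Differentiating `Q s *ᵥ φ s = b s`, which holds near `t`, gives
`(Q2 - Q1) *ᵥ φ + Q *ᵥ φ' = Q2 *ᵥ x2 - Q1 *ᵥ x1`; `t` times this minus `Q *ᵥ φ = b` is the ODE.
-/

open Matrix

theorem Matrix.PosDef.smul_add_smul {n R : Type*} [Fintype n] [CommRing R] [PartialOrder R]
    [StarRing R] [StarOrderedRing R] [IsStrictOrderedRing R]
    {A B : Matrix n n R} (hA : A.PosDef) (hB : B.PosDef) {a b : R}
    (ha : 0 ≤ a) (hb : 0 ≤ b) (hab : a + b = 1) : (a • A + b • B).PosDef := by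
  rcases ha.eq_or_lt with rfl | ha
  · obtain rfl : b = 1 := by simpa using hab
    simpa using hB
  · exact (hA.smul ha).add_posSemidef (hB.posSemidef.smul hb)

theorem hasDerivAt_sub_smul_add_smul {𝕜 F : Type*} [NontriviallyNormedField 𝕜]
    [NormedAddCommGroup F] [NormedSpace 𝕜 F] (u w : F) (t : 𝕜) :
    HasDerivAt (fun s => (1 - s) • u + s • w) (w - u) t := by
  convert AffineMap.hasDerivAt_lineMap (a := u) (b := w) (x := t) using 1
  exact funext fun s => (AffineMap.lineMap_apply_module u w s).symm

section

variable {𝕜 E : Type*} [NontriviallyNormedField 𝕜] [NormedAddCommGroup E] [NormedSpace 𝕜 E]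
  {m n : Type*} [Fintype n]

theorem DifferentiableAt.matrix_det [DecidableEq n] {M : E → Matrix n n 𝕜} {x : E}
    (hM : ∀ i j, DifferentiableAt 𝕜 (fun y => M y i j) x) :
    DifferentiableAt 𝕜 (fun y => (M y).det) x := by
  simp only [det_apply']
  fun_prop

theorem DifferentiableAt.matrix_inv_mulVec [DecidableEq n] {M : E → Matrix n n 𝕜}
    {v : E → n → 𝕜} {x : E} (hM : ∀ i j, DifferentiableAt 𝕜 (fun y => M y i j) x)
    (hv : DifferentiableAt 𝕜 v x) (hdet : (M x).det ≠ 0) :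
    DifferentiableAt 𝕜 (fun y => (M y)⁻¹ *ᵥ v y) x := by
  have hcramer : ∀ y, (M y)⁻¹ *ᵥ v y = (M y).det⁻¹ • cramer (M y) (v y) := fun y => by
    rw [inv_def, Ring.inverse_eq_inv', smul_mulVec, cramer_eq_adjugate_mulVec]
  simp only [hcramer]
  refine ((DifferentiableAt.matrix_det hM).inv hdet).smul (differentiableAt_pi.2 fun i => ?_)
  simp only [cramer_apply]
  refine DifferentiableAt.matrix_det fun k l => ?_
  simp only [updateCol_apply]
  split_ifs
  · exact differentiableAt_pi.1 hv k
  · exact hM k l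

theorem HasDerivAt.matrix_mulVec {M : 𝕜 → Matrix m n 𝕜} {M' : Matrix m n 𝕜}
    {v : 𝕜 → n → 𝕜} {v' : n → 𝕜} {t : 𝕜}
    (hM : ∀ i j, HasDerivAt (fun s => M s i j) (M' i j) t) (hv : HasDerivAt v v' t) :
    HasDerivAt (fun s => M s *ᵥ v s) (M' *ᵥ v t + M t *ᵥ v') t := by
  refine hasDerivAt_pi.2 fun i => ?_
  simp only [mulVec, dotProduct, Pi.add_apply, ← Finset.sum_add_distrib]
  exact HasDerivAt.fun_sum fun j _ => (hM i j).mul (hasDerivAt_pi.1 hv j)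

end

theorem stmt_8 {n : ℕ} (Q1 Q2 : Matrix (Fin n) (Fin n) ℝ)
    (hQ1 : Q1.PosDef) (hQ2 : Q2.PosDef) (x1 x2 : Fin n → ℝ)
    (φ : ℝ → (Fin n → ℝ))
    (hφ : ∀ t, φ t = ((1 - t) • Q1 + t • Q2)⁻¹ *ᵥ
      ((1 - t) • (Q1 *ᵥ x1) + t • (Q2 *ᵥ x2))) :
    (∀ t ∈ Set.Icc (0:ℝ) 1, DifferentiableAt ℝ φ t ∧
      t • (((1 - t) • Q1 + t • Q2) *ᵥ deriv φ t) = Q1 *ᵥ (φ t - x1)) ∧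
    φ 0 = x1 ∧ φ 1 = x2 := by
  set Q : ℝ → Matrix (Fin n) (Fin n) ℝ := fun s => (1 - s) • Q1 + s • Q2
  set b : ℝ → Fin n → ℝ := fun s => (1 - s) • (Q1 *ᵥ x1) + s • (Q2 *ᵥ x2)
  have hQ' : ∀ t i j, HasDerivAt (fun s => Q s i j) ((Q2 - Q1) i j) t := fun t i j => by
    simpa only [Q, Matrix.add_apply, Matrix.smul_apply, Matrix.sub_apply] using
      hasDerivAt_sub_smul_add_smul (Q1 i j) (Q2 i j) t
  have hb' : ∀ t, HasDerivAt b (Q2 *ᵥ x2 - Q1 *ᵥ x1) t := hasDerivAt_sub_smul_add_smul _ _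
  refine ⟨fun t ⟨ht0, ht1⟩ => ?_, ?_, ?_⟩
  · have hdet : (Q t).det ≠ 0 :=
      (hQ1.smul_add_smul hQ2 (sub_nonneg.2 ht1) ht0 (by ring)).det_pos.ne'
    have hdiff : DifferentiableAt ℝ φ t := by
      rw [funext hφ]
      exact .matrix_inv_mulVec (fun i j => (hQ' t i j).differentiableAt)
        (hb' t).differentiableAt hdet
    have hsolve : (fun s => Q s *ᵥ φ s) =ᶠ[nhds t] b := by
      filter_upwards [(DifferentiableAt.matrix_det fun i j =>
        (hQ' t i j).differentiableAt).continuousAt.eventually_ne hdet] with s hs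
      rw [hφ, mulVec_mulVec, mul_nonsing_inv _ (isUnit_iff_ne_zero.2 hs), one_mulVec]
    have hlin : (Q2 - Q1) *ᵥ φ t + Q t *ᵥ deriv φ t = Q2 *ᵥ x2 - Q1 *ᵥ x1 :=
      ((HasDerivAt.matrix_mulVec (hQ' t) hdiff.hasDerivAt).congr_of_eventuallyEq
        hsolve.symm).unique (hb' t)
    have hsol := hsolve.eq_of_nhds
    refine ⟨hdiff, ?_⟩
    simp only [Q, b, add_mulVec, smul_mulVec, sub_mulVec, mulVec_sub] at hlin hsol ⊢
    linear_combination (norm := module) t • hlin - hsol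
  · simp [hφ, mulVec_mulVec, nonsing_inv_mul _ (isUnit_iff_ne_zero.2 hQ1.det_pos.ne')]
  · simp [hφ, mulVec_mulVec, nonsing_inv_mul _ (isUnit_iff_ne_zero.2 hQ2.det_pos.ne')]
end

section
/- Suppose Q1/α = γ Q2/β with γ > 0 (proportional Hessians). Set κ_α = (x2−x1)ᵀQ1(x2−x1)/α and κ_β = (x2−x1)ᵀQ2(x2−x1)/β. Then along the segment φ(t) = (1−t)x1 + t x2, one has f1(φ(t)) = κ_α t² and f2(φ(t)) = κ_β (1−t)², and hence f2(φ(t)) = κ_β (1 − √(f1(φ(t))/κ_α))² for all t ∈ [0,1]. -/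
open Matrix

/-! The segment from `x1` to `x2` is `x1 + t • (x2 - x1) = x2 + (t - 1) • (x2 - x1)`, so both
quadratic forms, which are homogeneous of degree two, restrict to multiples of `t ^ 2` and
`(1 - t) ^ 2` along it. On `[0, 1]` the first one can be solved for `t` by a square root. -/

section QuadraticFormAlongSegment

variable {m R : Type*} [Fintype m] [CommRing R]

theorem Matrix.smul_dotProduct_mulVec_smul (A : Matrix m m R) (c : R) (v : m → R) :
    (c • v) ⬝ᵥ (A *ᵥ (c • v)) = c ^ 2 * (v ⬝ᵥ (A *ᵥ v)) := by
  rw [smul_dotProduct, mulVec_smul, dotProduct_smul, smul_eq_mul, smul_eq_mul]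
  ring

theorem Matrix.dotProduct_mulVec_segment_sub_left (A : Matrix m m R) (x y : m → R) (t : R) :
    ((1 - t) • x + t • y - x) ⬝ᵥ (A *ᵥ ((1 - t) • x + t • y - x)) =
      t ^ 2 * ((y - x) ⬝ᵥ (A *ᵥ (y - x))) := by
  rw [show (1 - t) • x + t • y - x = t • (y - x) by module, smul_dotProduct_mulVec_smul]

theorem Matrix.dotProduct_mulVec_segment_sub_right (A : Matrix m m R) (x y : m → R) (t : R) :
    ((1 - t) • x + t • y - y) ⬝ᵥ (A *ᵥ ((1 - t) • x + t • y - y)) =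
      (1 - t) ^ 2 * ((y - x) ⬝ᵥ (A *ᵥ (y - x))) := by
  rw [show (1 - t) • x + t • y - y = (t - 1) • (y - x) by module, smul_dotProduct_mulVec_smul,
    sub_sq_comm]

end QuadraticFormAlongSegment

theorem stmt_11_general {n : ℕ} (Q1 Q2 : Matrix (Fin n) (Fin n) ℝ)
    (hQ1 : Q1.PosDef) (x1 x2 : Fin n → ℝ) (hx : x1 ≠ x2)
    (α β : ℝ) (hα : 0 < α)
    (f1 f2 : (Fin n → ℝ) → ℝ)
    (hf1 : ∀ x, f1 x = (1 / α) * ((x - x1) ⬝ᵥ (Q1 *ᵥ (x - x1))))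
    (hf2 : ∀ x, f2 x = (1 / β) * ((x - x2) ⬝ᵥ (Q2 *ᵥ (x - x2))))
    (κα κβ : ℝ)
    (hκα : κα = ((x2 - x1) ⬝ᵥ (Q1 *ᵥ (x2 - x1))) / α)
    (hκβ : κβ = ((x2 - x1) ⬝ᵥ (Q2 *ᵥ (x2 - x1))) / β)
    (φ : ℝ → (Fin n → ℝ)) (hφ : ∀ t, φ t = (1 - t) • x1 + t • x2) :
    ∀ t ∈ Set.Icc (0:ℝ) 1,
      f1 (φ t) = κα * t ^ 2 ∧ f2 (φ t) = κβ * (1 - t) ^ 2 ∧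
      f2 (φ t) = κβ * (1 - Real.sqrt (f1 (φ t) / κα)) ^ 2 := by
  intro t ht
  have hκα_pos : 0 < κα := by
    have hv := hQ1.dotProduct_mulVec_pos (sub_ne_zero.mpr hx.symm)
    rw [star_trivial] at hv
    exact hκα ▸ div_pos hv hα
  have hf1φ : f1 (φ t) = κα * t ^ 2 := by
    rw [hf1, hφ, dotProduct_mulVec_segment_sub_left, hκα]
    ring
  have hf2φ : f2 (φ t) = κβ * (1 - t) ^ 2 := by
    rw [hf2, hφ, dotProduct_mulVec_segment_sub_right, hκβ]
    ring
  refine ⟨hf1φ, hf2φ, ?_⟩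
  rw [hf2φ, hf1φ, mul_div_cancel_left₀ _ hκα_pos.ne', Real.sqrt_sq ht.1]

theorem stmt_11 {n : ℕ} (Q1 Q2 : Matrix (Fin n) (Fin n) ℝ)
    (hQ1 : Q1.PosDef) (hQ2 : Q2.PosDef) (x1 x2 : Fin n → ℝ) (hx : x1 ≠ x2)
    (α β γ : ℝ) (hα : 0 < α) (hβ : 0 < β) (hγ : 0 < γ)
    (hprop : (1 / α) • Q1 = (γ / β) • Q2)
    (f1 f2 : (Fin n → ℝ) → ℝ)
    (hf1 : ∀ x, f1 x = (1 / α) * ((x - x1) ⬝ᵥ (Q1 *ᵥ (x - x1))))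
    (hf2 : ∀ x, f2 x = (1 / β) * ((x - x2) ⬝ᵥ (Q2 *ᵥ (x - x2))))
    (κα κβ : ℝ)
    (hκα : κα = ((x2 - x1) ⬝ᵥ (Q1 *ᵥ (x2 - x1))) / α)
    (hκβ : κβ = ((x2 - x1) ⬝ᵥ (Q2 *ᵥ (x2 - x1))) / β)
    (φ : ℝ → (Fin n → ℝ)) (hφ : ∀ t, φ t = (1 - t) • x1 + t • x2) :
    ∀ t ∈ Set.Icc (0:ℝ) 1,
      f1 (φ t) = κα * t ^ 2 ∧ f2 (φ t) = κβ * (1 - t) ^ 2 ∧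
      f2 (φ t) = κβ * (1 - Real.sqrt (f1 (φ t) / κα)) ^ 2 :=
  stmt_11_general Q1 Q2 hQ1 x1 x2 hx α β hα f1 f2 hf1 hf2 κα κβ hκα hκβ φ hφ
end

section
/- When the Hessians are proportional and normalized so that κ_α = κ_β = 1, the Pareto front is the graph of u ↦ (1 − √u)² on [0,1], and this function is convex and continuous on [0,1]. -/
/-!
The normalisations force `γ = 1`, so both objectives are squared distances
`f i x = p (x - x i) ^ 2` for the seminorm `p v = √(vᵀ Q1 v / α)`, in which `p (x2 - x1) = 1`.
By the triangle inequality `p (x - x1) + p (x - x2) ≥ 1`, with equality on the segment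
`[x1, x2]`; every point is weakly dominated by a point of the segment, and the points of the
segment are exactly the Pareto optimal ones. Their values `(t ^ 2, (1 - t) ^ 2)`, `t ∈ [0, 1]`,
trace the graph of `u ↦ (1 - √u) ^ 2 = u + 1 - 2 √u`, which is convex because `√` is concave.
-/

open Matrix

/-- A point `x` is Pareto optimal (non-dominated) for the bi-objective
minimization problem `(f1, f2)`. -/
def ParetoOptimal {n : ℕ} (f1 f2 : (Fin n → ℝ) → ℝ) (x : Fin n → ℝ) : Prop :=
  ¬ ∃ y : Fin n → ℝ, (f1 y ≤ f1 x ∧ f2 y ≤ f2 x) ∧ (f1 y < f1 x ∨ f2 y < f2 x)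

open Set

theorem Matrix.dotProduct_smul_mulVec {ι R : Type*} [Fintype ι] [CommSemiring R] (c : R)
    (M : Matrix ι ι R) (v w : ι → R) : v ⬝ᵥ ((c • M) *ᵥ w) = c * (v ⬝ᵥ (M *ᵥ w)) := by
  rw [smul_mulVec, dotProduct_smul, smul_eq_mul]

open scoped MatrixOrder in
theorem Matrix.PosSemidef.exists_seminorm_sq_eq {ι : Type*} [Fintype ι] {Q : Matrix ι ι ℝ}
    (hQ : Q.PosSemidef) : ∃ p : Seminorm ℝ (ι → ℝ), ∀ v, p v ^ 2 = v ⬝ᵥ (Q *ᵥ v) := by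
  classical
  obtain ⟨B, rfl⟩ := CStarAlgebra.nonneg_iff_eq_star_mul_self.mp hQ.nonneg
  refine ⟨(normSeminorm ℝ (EuclideanSpace ℝ ι)).comp
    ((WithLp.linearEquiv 2 ℝ (ι → ℝ)).symm.toLinearMap ∘ₗ B.mulVecLin), fun v => ?_⟩
  rw [Seminorm.comp_apply, coe_normSeminorm, EuclideanSpace.real_norm_sq_eq, ← mulVec_mulVec,
    dotProduct_mulVec, star_eq_conjTranspose, conjTranspose_eq_transpose_of_trivial,
    vecMul_transpose]
  simp [dotProduct, sq]

theorem paretoOptimal_comp_iff {n : ℕ} {f1 f2 : (Fin n → ℝ) → ℝ} {φ : ℝ → ℝ} {s : Set ℝ}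
    (hφ : StrictMonoOn φ s) (h1 : ∀ x, f1 x ∈ s) (h2 : ∀ x, f2 x ∈ s) (x : Fin n → ℝ) :
    ParetoOptimal (fun y => φ (f1 y)) (fun y => φ (f2 y)) x ↔ ParetoOptimal f1 f2 x := by
  simp only [ParetoOptimal, hφ.le_iff_le (h1 _) (h1 _), hφ.le_iff_le (h2 _) (h2 _),
    hφ.lt_iff_lt (h1 _) (h1 _), hφ.lt_iff_lt (h2 _) (h2 _)]

theorem ParetoOptimal.eq_of_le {n : ℕ} {f1 f2 : (Fin n → ℝ) → ℝ} {x y : Fin n → ℝ}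
    (hx : ParetoOptimal f1 f2 x) (h1 : f1 y ≤ f1 x) (h2 : f2 y ≤ f2 x) :
    f1 y = f1 x ∧ f2 y = f2 x :=
  ⟨h1.antisymm (not_lt.mp fun h => hx ⟨y, ⟨h1, h2⟩, .inl h⟩),
    h2.antisymm (not_lt.mp fun h => hx ⟨y, ⟨h1, h2⟩, .inr h⟩)⟩

section Seminorm

variable {n : ℕ} (p : Seminorm ℝ (Fin n → ℝ)) {x1 x2 : Fin n → ℝ}

theorem Seminorm.le_map_sub_add_map_sub (x : Fin n → ℝ) :
    p (x2 - x1) ≤ p (x - x1) + p (x - x2) := by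
  simpa using map_sub_le_add p (x - x1) (x - x2)

variable {p}

theorem Seminorm.map_lineMap_sub_left {t : ℝ} (ht : 0 ≤ t) (hp : p (x2 - x1) = 1) :
    p (AffineMap.lineMap x1 x2 t - x1) = t := by
  rw [← vsub_eq_sub, AffineMap.lineMap_vsub_left, vsub_eq_sub, map_smul_eq_mul, hp,
    Real.norm_of_nonneg ht, mul_one]

theorem Seminorm.map_lineMap_sub_right {t : ℝ} (ht : t ≤ 1) (hp : p (x2 - x1) = 1) :
    p (AffineMap.lineMap x1 x2 t - x2) = 1 - t := by
  rw [← vsub_eq_sub, AffineMap.lineMap_vsub_right, vsub_eq_sub, map_smul_eq_mul, map_sub_rev, hp,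
    Real.norm_of_nonneg (sub_nonneg.mpr ht), mul_one]

theorem Seminorm.image_paretoOptimal (hp : p (x2 - x1) = 1) :
    (fun x => (p (x - x1), p (x - x2))) ''
        {x | ParetoOptimal (fun y => p (y - x1)) (fun y => p (y - x2)) x} =
      {q | q.1 ∈ Icc 0 1 ∧ q.2 = 1 - q.1} := by
  ext ⟨a, b⟩
  simp only [mem_image, mem_ofPred_eq, Prod.mk.injEq]
  constructor
  · rintro ⟨x, hx, rfl, rfl⟩
    -- `x` is weakly dominated by the point of `[x1, x2]` at distance `min (p (x - x1)) 1` from `x1`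
    have htri := p.le_map_sub_add_map_sub (x1 := x1) (x2 := x2) x
    have ht0 : 0 ≤ min (p (x - x1)) 1 := le_min (apply_nonneg p _) zero_le_one
    have ht1 : min (p (x - x1)) 1 ≤ 1 := min_le_right _ _
    have h2 : 1 - min (p (x - x1)) 1 ≤ p (x - x2) := by
      rw [sub_le_comm]
      exact le_min (by linarith) (by linarith [apply_nonneg p (x - x2)])
    obtain ⟨h1, h2⟩ := hx.eq_of_le (y := AffineMap.lineMap x1 x2 (min (p (x - x1)) 1))
      ((map_lineMap_sub_left ht0 hp).trans_le (min_le_left _ _))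
      ((map_lineMap_sub_right ht1 hp).trans_le h2)
    simp only [map_lineMap_sub_left ht0 hp, map_lineMap_sub_right ht1 hp] at h1 h2
    exact ⟨⟨apply_nonneg p _, min_eq_left_iff.mp h1⟩, by rw [← h2, h1]⟩
  · rintro ⟨⟨ha0, ha1⟩, rfl⟩
    refine ⟨AffineMap.lineMap x1 x2 a, ?_, map_lineMap_sub_left ha0 hp,
      map_lineMap_sub_right ha1 hp⟩
    rintro ⟨y, ⟨hy1, hy2⟩, hlt⟩
    simp only [map_lineMap_sub_left ha0 hp, map_lineMap_sub_right ha1 hp] at hy1 hy2 hlt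
    have := p.le_map_sub_add_map_sub (x1 := x1) (x2 := x2) y
    rcases hlt with h | h <;> linarith

end Seminorm

theorem image_sq_segment :
    (fun q : ℝ × ℝ => (q.1 ^ 2, q.2 ^ 2)) '' {q | q.1 ∈ Icc 0 1 ∧ q.2 = 1 - q.1} =
      {q | q.1 ∈ Icc 0 1 ∧ q.2 = (1 - √q.1) ^ 2} := by
  ext ⟨u, v⟩
  simp only [mem_image, mem_ofPred_eq, mem_Icc, Prod.mk.injEq, Prod.exists]
  constructor
  · rintro ⟨a, _, ⟨⟨ha0, ha1⟩, rfl⟩, rfl, rfl⟩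
    exact ⟨⟨sq_nonneg a, pow_le_one₀ ha0 ha1⟩, by rw [Real.sqrt_sq ha0]⟩
  · rintro ⟨⟨hu0, hu1⟩, rfl⟩
    exact ⟨√u, 1 - √u, ⟨⟨Real.sqrt_nonneg u, Real.sqrt_le_one.mpr hu1⟩, rfl⟩, Real.sq_sqrt hu0, rfl⟩

theorem convexOn_one_sub_sqrt_sq : ConvexOn ℝ (Ici 0) (fun u : ℝ => (1 - √u) ^ 2) := by
  refine (((convexOn_id (convex_Ici 0)).add_const 1).add
    (Real.strictConcaveOn_sqrt.concaveOn.neg.smul zero_le_two)).congr fun u (hu : 0 ≤ u) => ?_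
  simp only [Pi.add_apply, id, Pi.neg_apply, smul_eq_mul]
  linear_combination (-1 : ℝ) * Real.sq_sqrt hu

theorem stmt_12_general {n : ℕ} (Q1 Q2 : Matrix (Fin n) (Fin n) ℝ)
    (hQ1 : Q1.PosDef) (x1 x2 : Fin n → ℝ)
    (α β γ : ℝ) (hα : 0 < α) (hβ : 0 < β)
    (hprop : (1 / α) • Q1 = (γ / β) • Q2)
    (hκα : ((x2 - x1) ⬝ᵥ (Q1 *ᵥ (x2 - x1))) / α = 1)
    (hκβ : ((x2 - x1) ⬝ᵥ (Q2 *ᵥ (x2 - x1))) / β = 1)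
    (f1 f2 : (Fin n → ℝ) → ℝ)
    (hf1 : ∀ x, f1 x = (1 / α) * ((x - x1) ⬝ᵥ (Q1 *ᵥ (x - x1))))
    (hf2 : ∀ x, f2 x = (1 / β) * ((x - x2) ⬝ᵥ (Q2 *ᵥ (x - x2)))) :
    (fun x => (f1 x, f2 x)) '' {x | ParetoOptimal f1 f2 x} =
      {p : ℝ × ℝ | p.1 ∈ Set.Icc (0:ℝ) 1 ∧ p.2 = (1 - Real.sqrt p.1) ^ 2} ∧
    ConvexOn ℝ (Set.Icc (0:ℝ) 1) (fun u => (1 - Real.sqrt u) ^ 2) ∧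
    ContinuousOn (fun u => (1 - Real.sqrt u) ^ 2) (Set.Icc (0:ℝ) 1) := by
  have hdQ1 : (x2 - x1) ⬝ᵥ (Q1 *ᵥ (x2 - x1)) = α := (div_eq_one_iff_eq hα.ne').mp hκα
  have hdQ2 : (x2 - x1) ⬝ᵥ (Q2 *ᵥ (x2 - x1)) = β := (div_eq_one_iff_eq hβ.ne').mp hκβ
  have hγ1 : γ = 1 := by
    have h := congrArg (fun M => (x2 - x1) ⬝ᵥ (M *ᵥ (x2 - x1))) hprop
    simp only [dotProduct_smul_mulVec, hdQ1, hdQ2] at h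
    field_simp at h
    exact h.symm
  obtain ⟨p, hp⟩ := (hQ1.posSemidef.smul (one_div_pos.mpr hα).le).exists_seminorm_sq_eq
  simp only [dotProduct_smul_mulVec] at hp
  obtain rfl : f1 = fun x => p (x - x1) ^ 2 := funext fun x => by rw [hf1, hp]
  obtain rfl : f2 = fun x => p (x - x2) ^ 2 := funext fun x => by
    have h := congrArg (fun M => (x - x2) ⬝ᵥ (M *ᵥ (x - x2))) hprop
    simp only [dotProduct_smul_mulVec, hγ1] at h
    rw [hf2, hp, h]
  have hp1 : p (x2 - x1) = 1 := by
    rw [← pow_eq_one_iff_of_nonneg (apply_nonneg p _) two_ne_zero, hp, hdQ1,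
      one_div_mul_cancel hα.ne']
  have hpareto : {x | ParetoOptimal (fun x => p (x - x1) ^ 2) (fun x => p (x - x2) ^ 2) x} =
      {x | ParetoOptimal (fun x => p (x - x1)) (fun x => p (x - x2)) x} :=
    Set.ext fun x => paretoOptimal_comp_iff (pow_left_strictMonoOn₀ two_ne_zero)
      (fun _ => apply_nonneg p _) (fun _ => apply_nonneg p _) x
  refine ⟨?_, convexOn_one_sub_sqrt_sq.subset Icc_subset_Ici_self (convex_Icc 0 1), by fun_prop⟩
  rw [hpareto, ← image_sq_segment, ← p.image_paretoOptimal hp1, image_image]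

theorem stmt_12 {n : ℕ} (Q1 Q2 : Matrix (Fin n) (Fin n) ℝ)
    (hQ1 : Q1.PosDef) (hQ2 : Q2.PosDef) (x1 x2 : Fin n → ℝ) (hx : x1 ≠ x2)
    (α β γ : ℝ) (hα : 0 < α) (hβ : 0 < β) (hγ : 0 < γ)
    (hprop : (1 / α) • Q1 = (γ / β) • Q2)
    (hκα : ((x2 - x1) ⬝ᵥ (Q1 *ᵥ (x2 - x1))) / α = 1)
    (hκβ : ((x2 - x1) ⬝ᵥ (Q2 *ᵥ (x2 - x1))) / β = 1)
    (f1 f2 : (Fin n → ℝ) → ℝ)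
    (hf1 : ∀ x, f1 x = (1 / α) * ((x - x1) ⬝ᵥ (Q1 *ᵥ (x - x1))))
    (hf2 : ∀ x, f2 x = (1 / β) * ((x - x2) ⬝ᵥ (Q2 *ᵥ (x - x2)))) :
    (fun x => (f1 x, f2 x)) '' {x | ParetoOptimal f1 f2 x} =
      {p : ℝ × ℝ | p.1 ∈ Set.Icc (0:ℝ) 1 ∧ p.2 = (1 - Real.sqrt p.1) ^ 2} ∧
    ConvexOn ℝ (Set.Icc (0:ℝ) 1) (fun u => (1 - Real.sqrt u) ^ 2) ∧
    ContinuousOn (fun u => (1 - Real.sqrt u) ^ 2) (Set.Icc (0:ℝ) 1) :=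
  stmt_12_general Q1 Q2 hQ1 x1 x2 α β γ hα hβ hprop hκα hκβ f1 f2 hf1 hf2
end

section
/- In the convex-quadratic problem P, t·(f1∘φ)'(t) = (2/α)⟨[(1−t)Q1 + tQ2]⁻¹ Q1(φ(t)−x1), Q1(φ(t)−x1)⟩ for all t ∈ [0,1], and consequently (f1∘φ)'(t) > 0 for all t ∈ (0,1]. -/
/-!
Write `A t = (1 - t) • Q1 + t • Q2` and `b t = (1 - t) • Q1 x1 + t • Q2 x2`, so that
`A t *ᵥ φ t = b t`. Since `A` and `b` are affine in `t`, `A s (φ s - φ t) = (s - t) w` with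
`w = (Q2 x2 - Q1 x1) - (Q2 - Q1) φ t`; so the difference quotient of `φ` is `(A s)⁻¹ w` and
continuity of the matrix inverse gives `φ' t = (A t)⁻¹ w`. The same identity at `s = 0` reads
`Q1 (φ t - x1) = t w`, hence `t φ' t = (A t)⁻¹ Q1 (φ t - x1)`, and the chain rule with
`∇f1 x = (2/α) Q1 (x - x1)` gives the formula. For `t > 0`, `φ t = x1` would force
`t Q2 (x2 - x1) = 0`; so `Q1 (φ t - x1) ≠ 0` and the right-hand side is positive because
`(A t)⁻¹` is positive definite.
-/

open Matrix Filter Topology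

theorem Matrix.PosDef.convexCombination {ι : Type*} {P Q : Matrix ι ι ℝ} (hP : P.PosDef)
    (hQ : Q.PosDef) {t : ℝ} (ht : t ∈ Set.Icc (0 : ℝ) 1) : ((1 - t) • P + t • Q).PosDef := by
  rcases ht.1.eq_or_lt with rfl | ht0
  · simpa using hP
  · exact PosDef.posSemidef_add (hP.posSemidef.smul (sub_nonneg.2 ht.2)) (hQ.smul ht0)

variable {𝕜 ι : Type*} [NontriviallyNormedField 𝕜] [Fintype ι] {t : 𝕜}

theorem HasDerivAt.dotProduct {u v : 𝕜 → ι → 𝕜} {u' v' : ι → 𝕜}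
    (hu : HasDerivAt u u' t) (hv : HasDerivAt v v' t) :
    HasDerivAt (fun s => u s ⬝ᵥ v s) (u' ⬝ᵥ v t + u t ⬝ᵥ v') t := by
  have := HasDerivAt.fun_sum (u := Finset.univ) fun i _ =>
    (hasDerivAt_pi.1 hu i).mul (hasDerivAt_pi.1 hv i)
  rwa [Finset.sum_add_distrib] at this

theorem HasDerivAt.const_mulVec {κ : Type*} (A : Matrix κ ι 𝕜) {u : 𝕜 → ι → 𝕜} {u' : ι → 𝕜}
    (hu : HasDerivAt u u' t) : HasDerivAt (fun s => A *ᵥ u s) (A *ᵥ u') t :=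
  hasDerivAt_pi.2 fun i => by simpa [mulVec] using (hasDerivAt_const t (A i)).dotProduct hu

theorem HasDerivAt.dotProduct_mulVec_self {Q : Matrix ι ι 𝕜} (hQ : Q.IsSymm)
    {u : 𝕜 → ι → 𝕜} {u' : ι → 𝕜} (hu : HasDerivAt u u' t) :
    HasDerivAt (fun s => u s ⬝ᵥ (Q *ᵥ u s)) (2 * (u' ⬝ᵥ (Q *ᵥ u t))) t := by
  convert hu.dotProduct (hu.const_mulVec Q) using 1
  rw [two_mul, dotProduct_mulVec, ← mulVec_transpose, hQ.eq, dotProduct_comm]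

theorem Matrix.mulVec_inv_mulVec [DecidableEq ι] {A : Matrix ι ι 𝕜} (hA : IsUnit A.det)
    (v : ι → 𝕜) : A *ᵥ (A⁻¹ *ᵥ v) = v := by
  rw [mulVec_mulVec, mul_nonsing_inv _ hA, one_mulVec]

theorem convexCombination_mulVec_sub {P Q : Matrix ι ι 𝕜} {u v : ι → 𝕜} (s : 𝕜) (y : ι → 𝕜) :
    ((1 - s) • P + s • Q) *ᵥ y - ((1 - s) • u + s • v) =
      ((1 - t) • P + t • Q) *ᵥ y - ((1 - t) • u + t • v) -
        (s - t) • ((v - u) - (Q - P) *ᵥ y) := by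
  simp only [add_mulVec, smul_mulVec, sub_mulVec]
  module

section InterpolatedSolution

variable [DecidableEq ι] (P Q : Matrix ι ι 𝕜) (u v : ι → 𝕜)

noncomputable def interpolatedSolution (s : 𝕜) : ι → 𝕜 :=
  ((1 - s) • P + s • Q)⁻¹ *ᵥ ((1 - s) • u + s • v)

variable {P Q u v}

theorem mulVec_interpolatedSolution (ht : IsUnit ((1 - t) • P + t • Q)) :
    ((1 - t) • P + t • Q) *ᵥ interpolatedSolution P Q u v t = (1 - t) • u + t • v :=
  mulVec_inv_mulVec ((isUnit_iff_isUnit_det _).1 ht) _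

theorem mulVec_interpolatedSolution_sub (ht : IsUnit ((1 - t) • P + t • Q)) :
    P *ᵥ interpolatedSolution P Q u v t - u =
      t • ((v - u) - (Q - P) *ᵥ interpolatedSolution P Q u v t) := by
  simpa [mulVec_interpolatedSolution ht] using
    convexCombination_mulVec_sub (P := P) (Q := Q) (u := u) (v := v) (t := t) 0
      (interpolatedSolution P Q u v t)

theorem interpolatedSolution_ne {x₁ x₂ : ι → 𝕜} (hQ : Q.det ≠ 0) (hx : x₁ ≠ x₂)
    (ht : IsUnit ((1 - t) • P + t • Q)) (ht0 : t ≠ 0) :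
    interpolatedSolution P Q (P *ᵥ x₁) (Q *ᵥ x₂) t ≠ x₁ := by
  intro h
  have h0 : t • (Q *ᵥ (x₂ - x₁)) = 0 := by
    have := mulVec_interpolatedSolution_sub (u := P *ᵥ x₁) (v := Q *ᵥ x₂) ht
    rw [h, sub_self] at this
    rw [this, mulVec_sub, sub_mulVec]
    module
  have := (smul_eq_zero.1 h0).resolve_left ht0
  exact hx (sub_eq_zero.1 (eq_zero_of_mulVec_eq_zero hQ this)).symm

theorem hasDerivAt_interpolatedSolution (ht : IsUnit ((1 - t) • P + t • Q)) :
    HasDerivAt (interpolatedSolution P Q u v)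
      (((1 - t) • P + t • Q)⁻¹ *ᵥ ((v - u) - (Q - P) *ᵥ interpolatedSolution P Q u v t)) t := by
  set φ := interpolatedSolution P Q u v
  set A : 𝕜 → Matrix ι ι 𝕜 := fun s => (1 - s) • P + s • Q
  set w := (v - u) - (Q - P) *ᵥ φ t
  have hA : Continuous A := by fun_prop
  have hAt : IsUnit (A t).det := (isUnit_iff_isUnit_det _).1 ht
  have hunit : ∀ᶠ s in 𝓝 t, IsUnit (A s) := by
    filter_upwards [(hA.matrix_det.continuousAt (x := t)).eventually_ne hAt.ne_zero] with s hs
    exact (isUnit_iff_isUnit_det _).2 hs.isUnit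
  have hslope : ∀ᶠ s in 𝓝[≠] t, slope φ t s = (A s)⁻¹ *ᵥ w := by
    filter_upwards [nhdsWithin_le_nhds hunit, self_mem_nhdsWithin] with s hs hst
    have key : A s *ᵥ (φ s - φ t) = (s - t) • w := by
      have := convexCombination_mulVec_sub (P := P) (Q := Q) (u := u) (v := v) (t := t) s (φ t)
      rw [mulVec_interpolatedSolution ht, sub_self, zero_sub] at this
      rw [mulVec_sub, mulVec_interpolatedSolution hs]
      linear_combination (norm := module) -this
    rw [slope_def_module, ← one_mulVec (_ - _),
      ← nonsing_inv_mul _ ((isUnit_iff_isUnit_det _).1 hs), ← mulVec_mulVec, key, mulVec_smul, smul_smul, inv_mul_cancel₀ (sub_ne_zero.2 hst), one_smul]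
  have hinv : ContinuousAt (fun s => (A s)⁻¹) t := by
    refine (continuousAt_matrix_inv _ ?_).comp hA.continuousAt
    simpa only [Ring.inverse_eq_inv'] using continuousAt_inv₀ hAt.ne_zero
  have hcont : ContinuousAt (fun s => (A s)⁻¹ *ᵥ w) t :=
    (continuous_id.matrix_mulVec continuous_const).continuousAt.comp hinv
  rw [hasDerivAt_iff_tendsto_slope]
  exact (hcont.tendsto.mono_left nhdsWithin_le_nhds).congr' (hslope.mono fun _ h => h.symm)

theorem mul_deriv_quadratic_comp_interpolatedSolution {x₁ : ι → 𝕜} (hP : P.IsSymm)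
    (ht : IsUnit ((1 - t) • P + t • Q)) (c : 𝕜) :
    t * deriv (fun s => c * ((interpolatedSolution P Q (P *ᵥ x₁) v s - x₁) ⬝ᵥ
      (P *ᵥ (interpolatedSolution P Q (P *ᵥ x₁) v s - x₁)))) t =
      2 * c * ((((1 - t) • P + t • Q)⁻¹ *ᵥ (P *ᵥ (interpolatedSolution P Q (P *ᵥ x₁) v t - x₁)))
        ⬝ᵥ (P *ᵥ (interpolatedSolution P Q (P *ᵥ x₁) v t - x₁))) := by
  have hderiv := ((hasDerivAt_interpolatedSolution (u := P *ᵥ x₁) (v := v) ht).sub_const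
    x₁).dotProduct_mulVec_self hP
  rw [(hderiv.const_mul c).deriv, mulVec_sub P, mulVec_interpolatedSolution_sub ht, mulVec_smul,
    smul_dotProduct, dotProduct_smul, smul_eq_mul, smul_eq_mul]
  ring

end InterpolatedSolution

theorem stmt_17 {n : ℕ} (Q1 Q2 : Matrix (Fin n) (Fin n) ℝ)
    (hQ1 : Q1.PosDef) (hQ2 : Q2.PosDef) (x1 x2 : Fin n → ℝ) (hx : x1 ≠ x2)
    (α : ℝ) (hα : 0 < α)
    (f1 : (Fin n → ℝ) → ℝ)
    (hf1 : ∀ x, f1 x = (1 / α) * ((x - x1) ⬝ᵥ (Q1 *ᵥ (x - x1))))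
    (φ : ℝ → (Fin n → ℝ))
    (hφ : ∀ t, φ t = ((1 - t) • Q1 + t • Q2)⁻¹ *ᵥ
      ((1 - t) • (Q1 *ᵥ x1) + t • (Q2 *ᵥ x2))) :
    (∀ t ∈ Set.Icc (0:ℝ) 1,
      t * deriv (f1 ∘ φ) t =
        (2 / α) * ((((1 - t) • Q1 + t • Q2)⁻¹ *ᵥ (Q1 *ᵥ (φ t - x1))) ⬝ᵥ
          (Q1 *ᵥ (φ t - x1)))) ∧
    (∀ t ∈ Set.Ioc (0:ℝ) 1, 0 < deriv (f1 ∘ φ) t) := by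
  have hφ' : φ = interpolatedSolution Q1 Q2 (Q1 *ᵥ x1) (Q2 *ᵥ x2) := funext hφ
  have hA := fun t (ht : t ∈ Set.Icc (0:ℝ) 1) => hQ1.convexCombination hQ2 ht
  have hmul_deriv : ∀ t ∈ Set.Icc (0:ℝ) 1, t * deriv (f1 ∘ φ) t =
      (2 / α) * ((((1 - t) • Q1 + t • Q2)⁻¹ *ᵥ (Q1 *ᵥ (φ t - x1))) ⬝ᵥ (Q1 *ᵥ (φ t - x1))) := by
    intro t ht
    subst hφ'
    rw [show f1 ∘ _ = _ from funext fun s => hf1 _, mul_deriv_quadratic_comp_interpolatedSolution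
      (isHermitian_iff_isSymm.1 hQ1.isHermitian) (hA t ht).isUnit]
    ring
  refine ⟨hmul_deriv, fun t ht => ?_⟩
  have ht' : t ∈ Set.Icc (0:ℝ) 1 := Set.Ioc_subset_Icc_self ht
  have hw : Q1 *ᵥ (φ t - x1) ≠ 0 := by
    rw [hφ']
    exact fun h => interpolatedSolution_ne hQ2.det_pos.ne' hx (hA t ht').isUnit ht.1.ne'
      (sub_eq_zero.1 (eq_zero_of_mulVec_eq_zero hQ1.det_pos.ne' h))
  have hquad := (hA t ht').inv.dotProduct_mulVec_pos hw
  rw [star_trivial, dotProduct_comm] at hquad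
  refine pos_of_mul_pos_right (a := t) ?_ ht.1.le
  rw [hmul_deriv t ht']
  positivity
end
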